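/- Let $R$ be a commutative ring of prime characteristic $p$, let $I \subseteq R$ be an ideal, and for $c \geq 0$ write $K_c = (I^{[p^c]} : I)$. Let $s \geq 1$ and let $\beta_1, \dots, \beta_s \geq 1$ be integers with $\beta_1 + \dots + \beta_s = e$. Then the product of ideals $K_{\beta_1} \cdot K_{\beta_2}^{[p^{\beta_1}]} \cdot K_{\beta_3}^{[p^{\beta_1+\beta_2}]} \cdots K_{\beta_s}^{[p^{\beta_1 + \dots + \beta_{s-1}}]}$ is contained in $K_e = (I^{[p^e]} : I)$. -/

import Mathlib

/-!
Colon ideals compose, `(J : I)(L : J) ⊆ (L : I)`, and a ring map pushes them forward,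
`f(J : I) ⊆ (f J : f I)`. With `f` the `a`-th Frobenius power this gives
`(I^[p^a] : I) · (I^[p^b] : I)^[p^a] ⊆ (I^[p^a] : I)(I^[p^(a+b)] : I^[p^a]) ⊆ (I^[p^(a+b)] : I)`,
and induction over the partial sums of `β` gives the theorem.
-/

open Ideal Finset

namespace Ideal

variable {R S : Type*} [CommSemiring R] [CommSemiring S]

theorem map_colon_le (f : R →+* S) (I J : Ideal R) :
    (J.colon I).map f ≤ (J.map f).colon (I.map f) := by
  change _ ≤ (J.map f).colon (span (f '' I) : Ideal S)
  rw [map_le_iff_le_comap, Ideal.colon_span]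
  intro r hr
  rw [mem_comap, Submodule.mem_colon]
  rintro _ ⟨i, hi, rfl⟩
  simpa only [smul_eq_mul, ← map_mul] using
    mem_map_of_mem f (Submodule.mem_colon.mp hr i hi)

theorem colon_mul_colon_le (I J L : Ideal R) : J.colon I * L.colon J ≤ L.colon I := by
  rw [mul_le]
  intro x hx y hy
  refine Submodule.mem_colon.mpr fun i hi => ?_
  have hxi : x * i ∈ J := Submodule.mem_colon.mp hx i hi
  simpa only [smul_eq_mul, mul_comm x y, mul_assoc] using Submodule.mem_colon.mp hy _ hxi

theorem colon_map_mul_map_colon_map_le (f g : R →+* R) (I : Ideal R) :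
    (I.map f).colon I * ((I.map g).colon I).map f ≤ (I.map (f.comp g)).colon I :=
  calc (I.map f).colon I * ((I.map g).colon I).map f
      ≤ (I.map f).colon I * ((I.map g).map f).colon (I.map f) :=
        mul_mono_right (map_colon_le f I _)
    _ ≤ (I.map (f.comp g)).colon I := by
        rw [map_map]
        exact colon_mul_colon_le _ _ _

end Ideal

theorem prod_map_colon_iterateFrobenius_le {R : Type*} [CommSemiring R] (p : ℕ) [ExpChar R p]
    (I : Ideal R) (β : ℕ → ℕ) (s : ℕ) :
    (∏ i ∈ range s, ((I.map (iterateFrobenius R p (β i))).colon I).map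
        (iterateFrobenius R p (∑ j ∈ range i, β j))) ≤
      (I.map (iterateFrobenius R p (∑ i ∈ range s, β i))).colon I := by
  induction s with
  | zero =>
    simp only [range_zero, prod_empty, sum_empty, iterateFrobenius_zero, map_id, one_eq_top,
      (Submodule.colon_eq_top_iff_subset _).mpr subset_rfl, le_rfl]
  | succ n ih =>
    rw [prod_range_succ, sum_range_succ, iterateFrobenius_add]
    exact (mul_mono_left ih).trans (colon_map_mul_map_colon_map_le _ _ I)

theorem frobenius_colon_prod_le_general
    (R : Type*) [CommRing R] (p : ℕ) [Fact p.Prime] [CharP R p]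
    (I : Ideal R) (K : ℕ → Ideal R)
    (hK : ∀ c, K c = (I.map (iterateFrobenius R p c)).colon I)
    (s : ℕ) (β : ℕ → ℕ)
    (e : ℕ) (he : ∑ i ∈ Finset.range s, β i = e) :
    (∏ i ∈ Finset.range s,
        (K (β i)).map (iterateFrobenius R p (∑ j ∈ Finset.range i, β j))) ≤ K e := by
  subst he
  simp only [hK]
  exact prod_map_colon_iterateFrobenius_le p I β s

/-- With `K c = (I^[p^c] : I)`, the product
`K β₁ * (K β₂)^[p^β₁] * (K β₃)^[p^(β₁+β₂)] * ⋯ * (K βₛ)^[p^(β₁+⋯+βₛ₋₁)]`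
is contained in `K e` whenever `β₁ + ⋯ + βₛ = e` with `s ≥ 1` and each `βᵢ ≥ 1`. -/
theorem frobenius_colon_prod_le
    (R : Type*) [CommRing R] (p : ℕ) [Fact p.Prime] [CharP R p]
    (I : Ideal R) (K : ℕ → Ideal R)
    (hK : ∀ c, K c = (I.map (iterateFrobenius R p c)).colon I)
    (s : ℕ) (hs : 1 ≤ s) (β : ℕ → ℕ) (hβ : ∀ i < s, 1 ≤ β i)
    (e : ℕ) (he : ∑ i ∈ Finset.range s, β i = e) :
    (∏ i ∈ Finset.range s,
        (K (β i)).map (iterateFrobenius R p (∑ j ∈ Finset.range i, β j))) ≤ K e :=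
  frobenius_colon_prod_le_general R p I K hK s β e he
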